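/- Let n ≥ 4, let i, j, l, s be four distinct indices in {1, …, n}, and let δ_1, δ_2, δ_3 ∈ {+1, −1}. Then the orthogonal complement of the vector v = e_i + δ_1 e_j + δ_2 e_l + δ_3 e_s inside the 4-dimensional subspace U spanned by {e_i, e_j, e_l, e_s} contains exactly 12 roots of Φ_{B_n}, and all of them are long. -/

import Mathlib

/-- The `i`-th standard basis vector of `ℝ^n` (Euclidean space). -/
noncomputable def stdBasis (n : ℕ) (i : Fin n) : EuclideanSpace ℝ (Fin n) :=
  EuclideanSpace.single i 1

/-- Short roots of `B_n` : `± e_i`. -/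
def IsShortRoot (n : ℕ) (x : EuclideanSpace ℝ (Fin n)) : Prop :=
  ∃ i : Fin n, x = stdBasis n i ∨ x = -stdBasis n i

/-- Long roots of `B_n` : `± e_i ± e_j` for `i ≠ j`. -/
def IsLongRoot (n : ℕ) (x : EuclideanSpace ℝ (Fin n)) : Prop :=
  ∃ i j : Fin n, i ≠ j ∧ ∃ ε₁ ε₂ : ℝ, (ε₁ = 1 ∨ ε₁ = -1) ∧ (ε₂ = 1 ∨ ε₂ = -1) ∧
    x = ε₁ • stdBasis n i + ε₂ • stdBasis n j

/-- The root system `Φ_{B_n}`. -/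
def PhiB (n : ℕ) : Set (EuclideanSpace ℝ (Fin n)) :=
  {x | IsShortRoot n x ∨ IsLongRoot n x}

/-!
A root of `B_n` in the span of the `e_k`, `k ∈ S`, is supported in `S`, so its inner product
with `v` is `± v_a` for a short root `± e_a` and `ε₁ v_a + ε₂ v_b` for a long root
`ε₁ e_a + ε₂ e_b`. As `v_k = ±1` on `S`, the former never vanishes, and the latter vanishes
exactly when `ε₁ e_a + ε₂ e_b = ±(v_a e_a - v_b e_b)`. Hence the roots in `W` are the vectors
`v_a e_a - v_b e_b` for ordered pairs `a ≠ b` in `S`; they are pairwise distinct, since `a` is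
the only coordinate in `S` where such a vector agrees with `v`. This gives `4 · 3 = 12` roots.
-/

section

open Submodule

variable {n : ℕ}

lemma stdBasis_apply (a k : Fin n) : stdBasis n a k = if k = a then 1 else 0 :=
  PiLp.single_apply ..

lemma mem_span_stdBasis_image_iff {S : Set (Fin n)} {x : EuclideanSpace ℝ (Fin n)} :
    x ∈ span ℝ (stdBasis n '' S) ↔ ∀ k ∉ S, x k = 0 := by
  have : stdBasis n = (EuclideanSpace.basisFun (Fin n) ℝ).toBasis := by
    ext a : 1; simp [stdBasis]
  rw [this, Module.Basis.mem_span_image]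
  simp [Set.subset_def, not_imp_comm]

lemma mul_self_eq_one_of_sign {ε : ℝ} (h : ε = 1 ∨ ε = -1) : ε * ε = 1 := by
  rcases h with rfl | rfl <;> norm_num

lemma mul_sign {ε δ : ℝ} (hε : ε = 1 ∨ ε = -1) (hδ : δ = 1 ∨ δ = -1) :
    ε * δ = 1 ∨ ε * δ = -1 := by
  rcases hε with rfl | rfl <;> rcases hδ with rfl | rfl <;> norm_num

lemma neg_sign {ε : ℝ} (h : ε = 1 ∨ ε = -1) : -ε = 1 ∨ -ε = -1 := by
  rcases h with rfl | rfl <;> norm_num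

noncomputable def perpRoot (v : EuclideanSpace ℝ (Fin n)) (a b : Fin n) :
    EuclideanSpace ℝ (Fin n) :=
  v a • stdBasis n a - v b • stdBasis n b

lemma perpRoot_swap (v : EuclideanSpace ℝ (Fin n)) (a b : Fin n) :
    perpRoot v b a = -perpRoot v a b := by
  simp only [perpRoot, neg_sub]

lemma perpRoot_apply_left (v : EuclideanSpace ℝ (Fin n)) {a b : Fin n} (hab : a ≠ b) :
    perpRoot v a b a = v a := by
  simp [perpRoot, stdBasis_apply, hab]

lemma perpRoot_apply_eq_self_iff {v : EuclideanSpace ℝ (Fin n)} {a b k : Fin n} (hab : a ≠ b)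
    (hk : v k ≠ 0) : perpRoot v a b k = v k ↔ k = a := by
  by_cases hka : k = a
  · subst hka; simp [perpRoot, stdBasis_apply, hab]
  by_cases hkb : k = b
  · subst hkb; simpa [perpRoot, stdBasis_apply, hka] using neg_ne_self.mpr hk
  · simp [perpRoot, stdBasis_apply, hka, hkb, hk.symm]

lemma inner_stdBasis_right (x : EuclideanSpace ℝ (Fin n)) (a : Fin n) :
    inner ℝ x (stdBasis n a) = x a := by
  simp [stdBasis, EuclideanSpace.inner_single_right]

lemma inner_smul_stdBasis_add_smul_stdBasis (v : EuclideanSpace ℝ (Fin n)) (c₁ c₂ : ℝ)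
    (a b : Fin n) :
    inner ℝ v (c₁ • stdBasis n a + c₂ • stdBasis n b) = c₁ * v a + c₂ * v b := by
  simp only [inner_add_right, real_inner_smul_right, inner_stdBasis_right]

section Roots

variable {S : Finset (Fin n)} {v : EuclideanSpace ℝ (Fin n)}

lemma perpRoot_isLongRoot {a b : Fin n} (hab : a ≠ b) (ha : v a = 1 ∨ v a = -1)
    (hb : v b = 1 ∨ v b = -1) : IsLongRoot n (perpRoot v a b) :=
  ⟨a, b, hab, v a, -v b, ha, neg_sign hb, by rw [perpRoot, neg_smul, sub_eq_add_neg]⟩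

lemma inner_perpRoot {a b : Fin n} (ha : v a = 1 ∨ v a = -1) (hb : v b = 1 ∨ v b = -1) :
    inner ℝ v (perpRoot v a b) = 0 := by
  rw [perpRoot, sub_eq_add_neg, ← neg_smul, inner_smul_stdBasis_add_smul_stdBasis,
    neg_mul, mul_self_eq_one_of_sign ha, mul_self_eq_one_of_sign hb, add_neg_cancel]

lemma perpRoot_apply_of_notMem {a b k : Fin n} (ha : a ∈ S) (hb : b ∈ S) (hk : k ∉ S) :
    perpRoot v a b k = 0 := by
  have hka : k ≠ a := (ne_of_mem_of_not_mem ha hk).symm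
  have hkb : k ≠ b := (ne_of_mem_of_not_mem hb hk).symm
  simp [perpRoot, stdBasis_apply, hka, hkb]

lemma not_isShortRoot_of_orthogonal (hv : ∀ k ∈ S, v k = 1 ∨ v k = -1)
    {x : EuclideanSpace ℝ (Fin n)} (hxS : ∀ k ∉ S, x k = 0) (hxv : inner ℝ v x = 0) :
    ¬ IsShortRoot n x := by
  rintro ⟨a, hx⟩
  have ha : a ∈ S := by
    by_contra ha
    have hxa := hxS a ha
    rcases hx with rfl | rfl <;> simp [stdBasis_apply] at hxa
  have hva : v a = 0 := by
    rcases hx with rfl | rfl <;> simpa [inner_stdBasis_right] using hxv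
  rcases hv a ha with h | h <;> simp [h] at hva

lemma exists_perpRoot_eq_of_isLongRoot (hv : ∀ k ∈ S, v k = 1 ∨ v k = -1)
    {x : EuclideanSpace ℝ (Fin n)} (hxS : ∀ k ∉ S, x k = 0) (hxv : inner ℝ v x = 0)
    (hx : IsLongRoot n x) : ∃ p ∈ S.offDiag, perpRoot v p.1 p.2 = x := by
  obtain ⟨a, b, hab, ε₁, ε₂, hε₁, hε₂, rfl⟩ := hx
  have ha : a ∈ S := by
    by_contra ha
    have hxa := hxS a ha
    simp [stdBasis_apply, hab] at hxa
    rcases hε₁ with rfl | rfl <;> norm_num at hxa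
  have hb : b ∈ S := by
    by_contra hb
    have hxb := hxS b hb
    simp [stdBasis_apply, hab.symm] at hxb
    rcases hε₂ with rfl | rfl <;> norm_num at hxb
  rw [inner_smul_stdBasis_add_smul_stdBasis] at hxv
  have hva := mul_self_eq_one_of_sign (hv a ha)
  have hvb := mul_self_eq_one_of_sign (hv b hb)
  have hx : ε₁ • stdBasis n a + ε₂ • stdBasis n b = (ε₁ * v a) • perpRoot v a b := by
    rw [perpRoot]
    match_scalars
    · linear_combination (-ε₁) * hva
    · linear_combination v b * hxv - ε₂ * hvb
  rcases mul_sign hε₁ (hv a ha) with ht | ht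
  · exact ⟨(a, b), Finset.mem_offDiag.mpr ⟨ha, hb, hab⟩, by rw [hx, ht, one_smul]⟩
  · exact ⟨(b, a), Finset.mem_offDiag.mpr ⟨hb, ha, hab.symm⟩,
      by rw [hx, ht, perpRoot_swap, neg_one_smul]⟩

lemma perpRoot_injOn (hv : ∀ k ∈ S, v k ≠ 0) :
    Set.InjOn (fun p : Fin n × Fin n ↦ perpRoot v p.1 p.2) S.offDiag := by
  have left_eq {a b a' b' : Fin n} (ha : a ∈ S) (hab : a ≠ b) (hab' : a' ≠ b')
      (h : perpRoot v a b = perpRoot v a' b') : a = a' := by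
    rw [← perpRoot_apply_eq_self_iff hab' (hv a ha), ← h, perpRoot_apply_left v hab]
  rintro ⟨a, b⟩ hp ⟨a', b'⟩ hp' h
  obtain ⟨ha, hb, hab⟩ := Finset.mem_offDiag.mp hp
  obtain ⟨-, -, hab'⟩ := Finset.mem_offDiag.mp hp'
  have h_swap : perpRoot v b a = perpRoot v b' a' := by
    rw [perpRoot_swap, perpRoot_swap v a' b', neg_inj]; exact h
  exact Prod.ext (left_eq ha hab hab' h) (left_eq hb hab.symm hab'.symm h_swap)

lemma coe_inf_orthogonal_inter_PhiB (hv : ∀ k ∈ S, v k = 1 ∨ v k = -1) :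
    ((span ℝ (stdBasis n '' S) ⊓ (span ℝ {v})ᗮ : Submodule ℝ (EuclideanSpace ℝ (Fin n))) :
        Set (EuclideanSpace ℝ (Fin n))) ∩ PhiB n =
      (fun p : Fin n × Fin n ↦ perpRoot v p.1 p.2) '' S.offDiag := by
  ext x
  simp only [Set.mem_inter_iff, SetLike.mem_coe, mem_inf, mem_span_stdBasis_image_iff,
    mem_orthogonal_singleton_iff_inner_right]
  constructor
  · rintro ⟨⟨hxS, hxv⟩, hx | hx⟩
    · exact absurd hx (not_isShortRoot_of_orthogonal hv hxS hxv)
    · exact exists_perpRoot_eq_of_isLongRoot hv hxS hxv hx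
  · rintro ⟨⟨a, b⟩, hp, rfl⟩
    obtain ⟨ha, hb, hab⟩ := Finset.mem_offDiag.mp hp
    exact ⟨⟨fun k hk ↦ perpRoot_apply_of_notMem ha hb hk, inner_perpRoot (hv a ha) (hv b hb)⟩,
      Or.inr (perpRoot_isLongRoot hab (hv a ha) (hv b hb))⟩

lemma ncard_inf_orthogonal_inter_PhiB (hv : ∀ k ∈ S, v k = 1 ∨ v k = -1) :
    (((span ℝ (stdBasis n '' S) ⊓ (span ℝ {v})ᗮ :
        Submodule ℝ (EuclideanSpace ℝ (Fin n))) : Set (EuclideanSpace ℝ (Fin n))) ∩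
      PhiB n).ncard = S.card * (S.card - 1) := by
  have hv₀ : ∀ k ∈ S, v k ≠ 0 := fun k hk ↦ by rcases hv k hk with h | h <;> simp [h]
  rw [coe_inf_orthogonal_inter_PhiB hv, (perpRoot_injOn hv₀).ncard_image,
    Set.ncard_coe_finset, Finset.offDiag_card, Nat.mul_sub_one]

end Roots

end

theorem stmt5_general (n : ℕ) (i j l s : Fin n)
    (hij : i ≠ j) (hil : i ≠ l) (his : i ≠ s) (hjl : j ≠ l) (hjs : j ≠ s) (hls : l ≠ s)
    (δ₁ δ₂ δ₃ : ℝ)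
    (hδ₁ : δ₁ = 1 ∨ δ₁ = -1) (hδ₂ : δ₂ = 1 ∨ δ₂ = -1) (hδ₃ : δ₃ = 1 ∨ δ₃ = -1)
    (v : EuclideanSpace ℝ (Fin n))
    (hv : v = stdBasis n i + δ₁ • stdBasis n j + δ₂ • stdBasis n l + δ₃ • stdBasis n s)
    (W : Submodule ℝ (EuclideanSpace ℝ (Fin n)))
    (hW : W = Submodule.span ℝ {stdBasis n i, stdBasis n j, stdBasis n l, stdBasis n s} ⊓
      (Submodule.span ℝ {v})ᗮ) :
    ((W : Set (EuclideanSpace ℝ (Fin n))) ∩ PhiB n).ncard = 12 ∧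
    ∀ x ∈ (W : Set (EuclideanSpace ℝ (Fin n))) ∩ PhiB n, IsLongRoot n x := by
  set S : Finset (Fin n) := {i, j, l, s}
  have hS : S.card = 4 :=
    Finset.card_eq_four.mpr ⟨i, j, l, s, hij, hil, his, hjl, hjs, hls, rfl⟩
  have hspan : {stdBasis n i, stdBasis n j, stdBasis n l, stdBasis n s} = stdBasis n '' S := by
    simp only [S, Finset.coe_insert, Finset.coe_singleton, Set.image_insert_eq,
      Set.image_singleton]
  have hvS : ∀ k ∈ S, v k = 1 ∨ v k = -1 := by
    subst hv
    simp [S, stdBasis_apply, hij, hil, his, hjl, hjs, hls, hij.symm, hil.symm, his.symm,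
      hjl.symm, hjs.symm, hls.symm, hδ₁, hδ₂, hδ₃]
  rw [hW, hspan]
  refine ⟨by rw [ncard_inf_orthogonal_inter_PhiB hvS, hS], ?_⟩
  rw [coe_inf_orthogonal_inter_PhiB hvS]
  rintro _ ⟨⟨a, b⟩, hp, rfl⟩
  obtain ⟨ha, hb, hab⟩ := Finset.mem_offDiag.mp hp
  exact perpRoot_isLongRoot hab (hvS a ha) (hvS b hb)

/-- The orthogonal complement of `v = e_i + δ₁ e_j + δ₂ e_l + δ₃ e_s` inside the standard
4-space spanned by `{e_i, e_j, e_l, e_s}` contains exactly 12 roots of `Φ_{B_n}`,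
all of which are long. -/
theorem stmt5 (n : ℕ) (hn : 4 ≤ n) (i j l s : Fin n)
    (hij : i ≠ j) (hil : i ≠ l) (his : i ≠ s) (hjl : j ≠ l) (hjs : j ≠ s) (hls : l ≠ s)
    (δ₁ δ₂ δ₃ : ℝ)
    (hδ₁ : δ₁ = 1 ∨ δ₁ = -1) (hδ₂ : δ₂ = 1 ∨ δ₂ = -1) (hδ₃ : δ₃ = 1 ∨ δ₃ = -1)
    (v : EuclideanSpace ℝ (Fin n))
    (hv : v = stdBasis n i + δ₁ • stdBasis n j + δ₂ • stdBasis n l + δ₃ • stdBasis n s)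
    (W : Submodule ℝ (EuclideanSpace ℝ (Fin n)))
    (hW : W = Submodule.span ℝ {stdBasis n i, stdBasis n j, stdBasis n l, stdBasis n s} ⊓
      (Submodule.span ℝ {v})ᗮ) :
    ((W : Set (EuclideanSpace ℝ (Fin n))) ∩ PhiB n).ncard = 12 ∧
    ∀ x ∈ (W : Set (EuclideanSpace ℝ (Fin n))) ∩ PhiB n, IsLongRoot n x :=
  stmt5_general n i j l s hij hil his hjl hjs hls δ₁ δ₂ δ₃ hδ₁ hδ₂ hδ₃ v hv W hW
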